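/- Let d, w₁, w₂ be positive integers, ξ a root of unity, χ a Dirichlet character mod d, m ≥ 1, and let B^{(m)}_{n,χ,ξ}(x) denote the order-m generalized twisted Bernoulli polynomials and T_{k,χ,ξ}(N) = ∑_{l=0}^{N} χ(l) ξ^l l^k. Then for all n ≥ 0 and all x, y, after multiplying by w₁w₂ to clear denominators: ∑_{j=0}^{n} C(n,j) w₂^{j+1} w₁^{n−j} B^{(m)}_{n−j,χ,ξ^{w₁}}(w₂x) ∑_{k=0}^{j} C(j,k) T_{k,χ,ξ^{w₂}}(w₁d−1) B^{(m−1)}_{j−k,χ,ξ^{w₂}}(w₁y) = ∑_{j=0}^{n} C(n,j) w₁^{j+1} w₂^{n−j} B^{(m)}_{n−j,χ,ξ^{w₂}}(w₁x) ∑_{k=0}^{j} C(j,k) T_{k,χ,ξ^{w₁}}(w₂d−1) B^{(m−1)}_{j−k,χ,ξ^{w₁}}(w₂y) (Theorem 1). -/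

import Mathlib

/-- `e^{at}` as a formal power series over `ℂ`. -/
noncomputable def expS (a : ℂ) : PowerSeries ℂ :=
  PowerSeries.mk fun n => a ^ n / n.factorial

open PowerSeries Finset

lemma expS_eq (a : ℂ) : expS a = rescale a (exp ℂ) := by
  ext n
  simp [expS, coeff_rescale, coeff_exp, map_div₀, div_eq_mul_inv]

lemma expS_mul (a b : ℂ) : expS a * expS b = expS (a + b) := by
  rw [expS_eq, expS_eq, expS_eq, exp_mul_exp_eq_exp_add]

lemma expS_zero : expS 0 = 1 := by
  ext n
  simp [expS, coeff_one]
  rcases n with _ | n <;> simp [Nat.factorial]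

lemma expS_pow (a : ℂ) (k : ℕ) : expS a ^ k = expS (k * a) := by
  induction k with
  | zero => simp [expS_zero]
  | succ k ih =>
    rw [pow_succ, ih, expS_mul]
    push_cast
    ring_nf

lemma rescale_expS (c a : ℂ) : rescale c (expS a) = expS (c * a) := by
  ext n
  simp [expS, coeff_rescale, mul_pow, mul_div_assoc]

lemma rescale_X' (c : ℂ) : rescale c (X : PowerSeries ℂ) = PowerSeries.C (R := ℂ) c * X := by
  ext n
  simp only [coeff_rescale, coeff_X, coeff_C_mul]
  rcases eq_or_ne n 1 with h | h <;> simp [h]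

lemma rescale_C' (c a : ℂ) : rescale c (PowerSeries.C (R := ℂ) a) = PowerSeries.C (R := ℂ) a := by
  ext n
  simp only [coeff_rescale, coeff_C]
  rcases eq_or_ne n 0 with h | h <;> simp [h]

lemma sum_range_mul_decomp {M : Type*} [AddCommMonoid M] (f : ℕ → M) (w d : ℕ) :
    ∑ l ∈ range (w * d), f l = ∑ j ∈ range w, ∑ a ∈ range d, f (d * j + a) := by
  induction w with
  | zero => simp
  | succ w ih =>
    rw [Nat.succ_mul, Finset.sum_range_add, ih, Finset.sum_range_succ]
    congr 1
    exact Finset.sum_congr rfl fun a _ => by rw [mul_comm d w]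

lemma twist_sum_mul (d w v : ℕ) (ζ : ℂ) (χ : DirichletCharacter ℂ d) :
    (∑ l ∈ Finset.range (v * d),
        PowerSeries.C (R := ℂ) (χ (l : ZMod d) * (ζ ^ w) ^ l) * expS ((w : ℂ) * l)) *
      (PowerSeries.C (R := ℂ) ((ζ ^ w) ^ d) * expS ((w : ℂ) * d) - 1)
    = (∑ a ∈ Finset.range d,
        PowerSeries.C (R := ℂ) (χ (a : ZMod d) * (ζ ^ w) ^ a) * expS ((w : ℂ) * a)) *
      ((PowerSeries.C (R := ℂ) ((ζ ^ w) ^ d) * expS ((w : ℂ) * d)) ^ v - 1) := by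
  rw [sum_range_mul_decomp (fun l => PowerSeries.C (R := ℂ) (χ (l : ZMod d) * (ζ ^ w) ^ l) *
    expS ((w : ℂ) * l)) v d]
  have hterm : ∀ j a : ℕ,
      PowerSeries.C (R := ℂ) (χ ((d * j + a : ℕ) : ZMod d) * (ζ ^ w) ^ (d * j + a)) *
        expS ((w : ℂ) * ((d * j + a : ℕ) : ℂ))
      = (PowerSeries.C (R := ℂ) (χ (a : ZMod d) * (ζ ^ w) ^ a) * expS ((w : ℂ) * a)) *
        (PowerSeries.C (R := ℂ) ((ζ ^ w) ^ d) * expS ((w : ℂ) * d)) ^ j := by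
    intro j a
    have hχ : ((d * j + a : ℕ) : ZMod d) = (a : ZMod d) := by push_cast; simp
    have hpow : (ζ ^ w) ^ (d * j + a) = (ζ ^ w) ^ a * ((ζ ^ w) ^ d) ^ j := by
      rw [pow_add, ← pow_mul]; ring
    have hexp : expS ((w : ℂ) * ((d * j + a : ℕ) : ℂ))
        = expS ((w : ℂ) * a) * expS ((w : ℂ) * d) ^ j := by
      rw [expS_pow, expS_mul]
      push_cast
      ring_nf
    rw [hχ, hpow, hexp]
    simp only [map_mul, map_pow, mul_pow]
    ring
  calc (∑ j ∈ range v, ∑ a ∈ range d,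
        PowerSeries.C (R := ℂ) (χ ((d * j + a : ℕ) : ZMod d) * (ζ ^ w) ^ (d * j + a)) *
          expS ((w : ℂ) * ((d * j + a : ℕ) : ℂ))) *
      (PowerSeries.C (R := ℂ) ((ζ ^ w) ^ d) * expS ((w : ℂ) * d) - 1)
      = ((∑ a ∈ Finset.range d,
          PowerSeries.C (R := ℂ) (χ (a : ZMod d) * (ζ ^ w) ^ a) * expS ((w : ℂ) * a)) *
        ∑ j ∈ range v, (PowerSeries.C (R := ℂ) ((ζ ^ w) ^ d) * expS ((w : ℂ) * d)) ^ j) *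
        (PowerSeries.C (R := ℂ) ((ζ ^ w) ^ d) * expS ((w : ℂ) * d) - 1) := by
        congr 1
        rw [Finset.mul_sum]
        refine Finset.sum_congr rfl fun j _ => ?_
        rw [Finset.sum_mul]
        exact Finset.sum_congr rfl fun a _ => hterm j a
    _ = _ := by
        rw [mul_assoc, geom_sum_mul]

lemma double_sum_eq (n : ℕ) (w v : ℂ) (P Q T : ℕ → ℂ) (R U W' : PowerSeries ℂ)
    (hR : ∀ r, coeff r R = P r * v ^ r / r.factorial)
    (hU : ∀ k, coeff k U = w ^ k * T k / k.factorial)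
    (hW : ∀ r, coeff r W' = Q r * w ^ r / r.factorial) :
    ∑ j ∈ range (n + 1), (n.choose j : ℂ) * w ^ (j + 1) * v ^ (n - j) * P (n - j) *
        ∑ k ∈ range (j + 1), (j.choose k : ℂ) * T k * Q (j - k)
      = n.factorial * coeff n (PowerSeries.C (R := ℂ) w * R * U * W') := by
  rw [show PowerSeries.C (R := ℂ) w * R * U * W' = PowerSeries.C (R := ℂ) w * (R * (U * W')) by ring,
    coeff_C_mul, coeff_mul,
    Nat.sum_antidiagonal_eq_sum_range_succ (fun a b => coeff a R * coeff b (U * W')) n,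
    ← Finset.sum_range_reflect]
  simp only [Finset.mul_sum]
  refine Finset.sum_congr rfl fun j hj => ?_
  have hj' : j ≤ n := Nat.lt_succ_iff.mp (Finset.mem_range.mp hj)
  simp only [Nat.add_sub_cancel]
  have hsub : n - (n - j) = j := Nat.sub_sub_self hj'
  have hs : n - j ≤ n := Nat.sub_le n j
  rw [hsub, hR, coeff_mul,
    Nat.sum_antidiagonal_eq_sum_range_succ (fun a b => coeff a U * coeff b W') (n - j)]
  simp only [Finset.mul_sum]
  refine Finset.sum_congr rfl fun k hk => ?_
  have hk' : k ≤ n - j := Nat.lt_succ_iff.mp (Finset.mem_range.mp hk)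
  rw [hU, hW]
  have e1 : (n.choose (n - j) : ℂ) = n.factorial / ((n - j).factorial * j.factorial) := by
    rw [Nat.cast_choose ℂ hs, hsub]
  have e2 : ((n - j).choose k : ℂ)
      = (n - j).factorial / (k.factorial * (n - j - k).factorial) :=
    Nat.cast_choose ℂ hk'
  have e3 : w ^ (n - j + 1) = w * w ^ k * w ^ (n - j - k) := by
    rw [show n - j + 1 = 1 + k + (n - j - k) by omega, pow_add, pow_add, pow_one]
  have f1 : ((n - j).factorial : ℂ) ≠ 0 := Nat.cast_ne_zero.mpr (Nat.factorial_ne_zero _)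
  have f2 : (j.factorial : ℂ) ≠ 0 := Nat.cast_ne_zero.mpr (Nat.factorial_ne_zero _)
  have f3 : (k.factorial : ℂ) ≠ 0 := Nat.cast_ne_zero.mpr (Nat.factorial_ne_zero _)
  have f4 : ((n - j - k).factorial : ℂ) ≠ 0 := Nat.cast_ne_zero.mpr (Nat.factorial_ne_zero _)
  rw [e1, e2, e3]
  field_simp


/-- Theorem 1: symmetry identity for the generalized twisted Bernoulli polynomials of
higher order, with both sides multiplied by `w₁w₂` to clear denominators. `B1 m n`,
`B2 m n` are the order-`m` generalized twisted Bernoulli polynomials attached to `χ`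
with twists `ξ^{w₁}` and `ξ^{w₂}` respectively. -/
theorem generalized_twisted_bernoulli_higher_order_symmetry
    (d w₁ w₂ : ℕ) (hd : 0 < d) (hw₁ : 0 < w₁) (hw₂ : 0 < w₂)
    (ξ : ℂ) (hξ : ∃ k : ℕ, 0 < k ∧ ξ ^ k = 1)
    (χ : DirichletCharacter ℂ d) (B1 B2 : ℕ → ℕ → ℂ → ℂ)
    (hB1 : ∀ (m : ℕ) (x : ℂ),
      (PowerSeries.mk fun n => B1 m n x / n.factorial) *
          (PowerSeries.C (R := ℂ) ((ξ ^ w₁) ^ d) * expS d - 1) ^ m =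
        (PowerSeries.X *
            ∑ a ∈ Finset.range d, PowerSeries.C (R := ℂ) (χ (a : ZMod d) * (ξ ^ w₁) ^ a) * expS a) ^ m *
          expS x)
    (hB2 : ∀ (m : ℕ) (x : ℂ),
      (PowerSeries.mk fun n => B2 m n x / n.factorial) *
          (PowerSeries.C (R := ℂ) ((ξ ^ w₂) ^ d) * expS d - 1) ^ m =
        (PowerSeries.X *
            ∑ a ∈ Finset.range d, PowerSeries.C (R := ℂ) (χ (a : ZMod d) * (ξ ^ w₂) ^ a) * expS a) ^ m *
          expS x)
    (m : ℕ) (hm : 1 ≤ m) (n : ℕ) (x y : ℂ) :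
    ∑ j ∈ Finset.range (n + 1), (n.choose j : ℂ) * (w₂ : ℂ) ^ (j + 1) * (w₁ : ℂ) ^ (n - j) *
        B1 m (n - j) ((w₂ : ℂ) * x) *
        ∑ k ∈ Finset.range (j + 1), (j.choose k : ℂ) *
          (∑ l ∈ Finset.range (w₁ * d), χ (l : ZMod d) * (ξ ^ w₂) ^ l * (l : ℂ) ^ k) *
          B2 (m - 1) (j - k) ((w₁ : ℂ) * y) =
      ∑ j ∈ Finset.range (n + 1), (n.choose j : ℂ) * (w₁ : ℂ) ^ (j + 1) * (w₂ : ℂ) ^ (n - j) *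
        B2 m (n - j) ((w₁ : ℂ) * x) *
        ∑ k ∈ Finset.range (j + 1), (j.choose k : ℂ) *
          (∑ l ∈ Finset.range (w₂ * d), χ (l : ZMod d) * (ξ ^ w₁) ^ l * (l : ℂ) ^ k) *
          B1 (m - 1) (j - k) ((w₂ : ℂ) * y) := by
  obtain ⟨k0, hk0, hξk⟩ := hξ
  have hξ0 : ξ ≠ 0 := by
    intro h
    rw [h, zero_pow hk0.ne'] at hξk
    exact zero_ne_one hξk
  obtain ⟨m', rfl⟩ : ∃ m', m = m' + 1 := ⟨m - 1, by omega⟩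
  simp only [Nat.add_sub_cancel]
  -- series definitions
  set Sw₁ : PowerSeries ℂ :=
    ∑ a ∈ Finset.range d, PowerSeries.C (R := ℂ) (χ (a : ZMod d) * (ξ ^ w₁) ^ a) * expS ((w₁ : ℂ) * a)
    with hSw₁
  set Sw₂ : PowerSeries ℂ :=
    ∑ a ∈ Finset.range d, PowerSeries.C (R := ℂ) (χ (a : ZMod d) * (ξ ^ w₂) ^ a) * expS ((w₂ : ℂ) * a)
    with hSw₂
  set Z₁ : PowerSeries ℂ := PowerSeries.C (R := ℂ) ((ξ ^ w₁) ^ d) * expS ((w₁ : ℂ) * d) with hZ₁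
  set Z₂ : PowerSeries ℂ := PowerSeries.C (R := ℂ) ((ξ ^ w₂) ^ d) * expS ((w₂ : ℂ) * d) with hZ₂
  set U₁ : PowerSeries ℂ := ∑ l ∈ Finset.range (w₂ * d),
    PowerSeries.C (R := ℂ) (χ (l : ZMod d) * (ξ ^ w₁) ^ l) * expS ((w₁ : ℂ) * l) with hU₁
  set U₂ : PowerSeries ℂ := ∑ l ∈ Finset.range (w₁ * d),
    PowerSeries.C (R := ℂ) (χ (l : ZMod d) * (ξ ^ w₂) ^ l) * expS ((w₂ : ℂ) * l) with hU₂
  set A1 : PowerSeries ℂ :=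
    rescale (w₁ : ℂ) (PowerSeries.mk fun r => B1 (m' + 1) r ((w₂ : ℂ) * x) / r.factorial) with hA1d
  set A2 : PowerSeries ℂ :=
    rescale (w₂ : ℂ) (PowerSeries.mk fun r => B2 (m' + 1) r ((w₁ : ℂ) * x) / r.factorial) with hA2d
  set G1 : PowerSeries ℂ :=
    rescale (w₁ : ℂ) (PowerSeries.mk fun r => B1 m' r ((w₂ : ℂ) * y) / r.factorial) with hG1d
  set G2 : PowerSeries ℂ :=
    rescale (w₂ : ℂ) (PowerSeries.mk fun r => B2 m' r ((w₁ : ℂ) * y) / r.factorial) with hG2d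
  -- rescaled generating-function identities
  have key1 : A1 * (Z₁ - 1) ^ (m' + 1)
      = (PowerSeries.C (R := ℂ) (w₁ : ℂ) * X * Sw₁) ^ (m' + 1) * expS ((w₁ : ℂ) * ((w₂ : ℂ) * x)) := by
    have h := congrArg (rescale (w₁ : ℂ)) (hB1 (m' + 1) ((w₂ : ℂ) * x))
    simpa only [map_mul, map_pow, map_sub, map_one, map_sum, rescale_C', rescale_X',
      rescale_expS, hZ₁, hSw₁, hA1d, mul_assoc] using h
  have key2 : A2 * (Z₂ - 1) ^ (m' + 1)
      = (PowerSeries.C (R := ℂ) (w₂ : ℂ) * X * Sw₂) ^ (m' + 1) * expS ((w₂ : ℂ) * ((w₁ : ℂ) * x)) := by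
    have h := congrArg (rescale (w₂ : ℂ)) (hB2 (m' + 1) ((w₁ : ℂ) * x))
    simpa only [map_mul, map_pow, map_sub, map_one, map_sum, rescale_C', rescale_X',
      rescale_expS, hZ₂, hSw₂, hA2d, mul_assoc] using h
  have keyG1 : G1 * (Z₁ - 1) ^ m'
      = (PowerSeries.C (R := ℂ) (w₁ : ℂ) * X * Sw₁) ^ m' * expS ((w₁ : ℂ) * ((w₂ : ℂ) * y)) := by
    have h := congrArg (rescale (w₁ : ℂ)) (hB1 m' ((w₂ : ℂ) * y))
    simpa only [map_mul, map_pow, map_sub, map_one, map_sum, rescale_C', rescale_X',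
      rescale_expS, hZ₁, hSw₁, hG1d, mul_assoc] using h
  have keyG2 : G2 * (Z₂ - 1) ^ m'
      = (PowerSeries.C (R := ℂ) (w₂ : ℂ) * X * Sw₂) ^ m' * expS ((w₂ : ℂ) * ((w₁ : ℂ) * y)) := by
    have h := congrArg (rescale (w₂ : ℂ)) (hB2 m' ((w₁ : ℂ) * y))
    simpa only [map_mul, map_pow, map_sub, map_one, map_sum, rescale_C', rescale_X',
      rescale_expS, hZ₂, hSw₂, hG2d, mul_assoc] using h
  -- twisted geometric identities
  have hu2 : U₂ * (Z₂ - 1) = Sw₂ * (Z₂ ^ w₁ - 1) := twist_sum_mul d w₂ w₁ ξ χ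
  have hu1 : U₁ * (Z₁ - 1) = Sw₁ * (Z₁ ^ w₂ - 1) := twist_sum_mul d w₁ w₂ ξ χ
  -- symmetry of Z powers
  have hZsym : Z₂ ^ w₁ = Z₁ ^ w₂ := by
    rw [hZ₁, hZ₂, mul_pow, mul_pow, ← map_pow, ← map_pow, expS_pow, expS_pow,
      ← pow_mul, ← pow_mul, ← pow_mul, ← pow_mul]
    rw [show w₂ * (d * w₁) = w₁ * (d * w₂) by ring, show (w₁ : ℂ) * ((w₂ : ℂ) * (d : ℂ))
      = (w₂ : ℂ) * ((w₁ : ℂ) * (d : ℂ)) by ring]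
  -- nonvanishing
  have hZ₁ne : Z₁ - 1 ≠ 0 := by
    intro h
    have h1 := congrArg (coeff 1) h
    simp only [hZ₁, map_sub, coeff_C_mul, expS, coeff_mk, coeff_one, map_zero] at h1
    simp only [pow_one, Nat.factorial_one, Nat.cast_one, div_one] at h1
    have : ((ξ ^ w₁) ^ d) * ((w₁ : ℂ) * (d : ℂ)) ≠ 0 :=
      mul_ne_zero (pow_ne_zero _ (pow_ne_zero _ hξ0))
        (mul_ne_zero (Nat.cast_ne_zero.mpr hw₁.ne') (Nat.cast_ne_zero.mpr hd.ne'))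
    simp only [if_neg one_ne_zero, sub_zero] at h1
    exact this h1
  have hZ₂ne : Z₂ - 1 ≠ 0 := by
    intro h
    have h1 := congrArg (coeff 1) h
    simp only [hZ₂, map_sub, coeff_C_mul, expS, coeff_mk, coeff_one, map_zero] at h1
    simp only [pow_one, Nat.factorial_one, Nat.cast_one, div_one] at h1
    have : ((ξ ^ w₂) ^ d) * ((w₂ : ℂ) * (d : ℂ)) ≠ 0 :=
      mul_ne_zero (pow_ne_zero _ (pow_ne_zero _ hξ0))
        (mul_ne_zero (Nat.cast_ne_zero.mpr hw₂.ne') (Nat.cast_ne_zero.mpr hd.ne'))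
    simp only [if_neg one_ne_zero, sub_zero] at h1
    exact this h1
  -- the central power-series identity
  have main : PowerSeries.C (R := ℂ) (w₂ : ℂ) * A1 * U₂ * G2
      = PowerSeries.C (R := ℂ) (w₁ : ℂ) * A2 * U₁ * G1 := by
    have hne : X * (Z₁ - 1) ^ (m' + 1) * (Z₂ - 1) ^ (m' + 1) ≠ 0 :=
      mul_ne_zero (mul_ne_zero X_ne_zero (pow_ne_zero _ hZ₁ne)) (pow_ne_zero _ hZ₂ne)
    apply mul_right_cancel₀ hne
    calc (PowerSeries.C (R := ℂ) (w₂ : ℂ) * A1 * U₂ * G2) *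
        (X * (Z₁ - 1) ^ (m' + 1) * (Z₂ - 1) ^ (m' + 1))
        = (A1 * (Z₁ - 1) ^ (m' + 1)) * ((G2 * (Z₂ - 1) ^ m') *
            ((U₂ * (Z₂ - 1)) * (PowerSeries.C (R := ℂ) (w₂ : ℂ) * X))) := by ring
      _ = ((PowerSeries.C (R := ℂ) (w₁ : ℂ) * X * Sw₁) ^ (m' + 1) * expS ((w₁ : ℂ) * ((w₂ : ℂ) * x))) *
          (((PowerSeries.C (R := ℂ) (w₂ : ℂ) * X * Sw₂) ^ m' * expS ((w₂ : ℂ) * ((w₁ : ℂ) * y))) *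
            ((Sw₂ * (Z₁ ^ w₂ - 1)) * (PowerSeries.C (R := ℂ) (w₂ : ℂ) * X))) := by
          rw [key1, keyG2, hu2, hZsym]
      _ = ((PowerSeries.C (R := ℂ) (w₂ : ℂ) * X * Sw₂) ^ (m' + 1) * expS ((w₂ : ℂ) * ((w₁ : ℂ) * x))) *
          (((PowerSeries.C (R := ℂ) (w₁ : ℂ) * X * Sw₁) ^ m' * expS ((w₁ : ℂ) * ((w₂ : ℂ) * y))) *
            ((Sw₁ * (Z₁ ^ w₂ - 1)) * (PowerSeries.C (R := ℂ) (w₁ : ℂ) * X))) := by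
          have eexp : expS ((w₁ : ℂ) * ((w₂ : ℂ) * x)) * expS ((w₂ : ℂ) * ((w₁ : ℂ) * y))
              = expS ((w₂ : ℂ) * ((w₁ : ℂ) * x)) * expS ((w₁ : ℂ) * ((w₂ : ℂ) * y)) := by
            rw [expS_mul, expS_mul]
            ring_nf
          linear_combination ((PowerSeries.C (R := ℂ) (w₁ : ℂ) * X * Sw₁) ^ (m' + 1) *
            (PowerSeries.C (R := ℂ) (w₂ : ℂ) * X * Sw₂) ^ (m' + 1) * (Z₁ ^ w₂ - 1)) * eexp
      _ = (PowerSeries.C (R := ℂ) (w₁ : ℂ) * A2 * U₁ * G1) *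
          (X * (Z₁ - 1) ^ (m' + 1) * (Z₂ - 1) ^ (m' + 1)) := by
          rw [← hu1, ← key2, ← keyG1]
          ring
  -- coefficient extraction
  have hR1 : ∀ r, coeff r A1 = B1 (m' + 1) r ((w₂ : ℂ) * x) * (w₁ : ℂ) ^ r / r.factorial := by
    intro r
    rw [hA1d, coeff_rescale, coeff_mk]
    ring
  have hR2 : ∀ r, coeff r A2 = B2 (m' + 1) r ((w₁ : ℂ) * x) * (w₂ : ℂ) ^ r / r.factorial := by
    intro r
    rw [hA2d, coeff_rescale, coeff_mk]
    ring
  have hQ1 : ∀ r, coeff r G1 = B1 m' r ((w₂ : ℂ) * y) * (w₁ : ℂ) ^ r / r.factorial := by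
    intro r
    rw [hG1d, coeff_rescale, coeff_mk]
    ring
  have hQ2 : ∀ r, coeff r G2 = B2 m' r ((w₁ : ℂ) * y) * (w₂ : ℂ) ^ r / r.factorial := by
    intro r
    rw [hG2d, coeff_rescale, coeff_mk]
    ring
  have hT2 : ∀ k, coeff k U₂ = (w₂ : ℂ) ^ k *
      (∑ l ∈ Finset.range (w₁ * d), χ (l : ZMod d) * (ξ ^ w₂) ^ l * (l : ℂ) ^ k) /
      k.factorial := by
    intro k
    rw [hU₂, map_sum, Finset.mul_sum, Finset.sum_div]
    refine Finset.sum_congr rfl fun l _ => ?_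
    rw [coeff_C_mul]
    simp only [expS, coeff_mk]
    rw [mul_pow]
    ring
  have hT1 : ∀ k, coeff k U₁ = (w₁ : ℂ) ^ k *
      (∑ l ∈ Finset.range (w₂ * d), χ (l : ZMod d) * (ξ ^ w₁) ^ l * (l : ℂ) ^ k) /
      k.factorial := by
    intro k
    rw [hU₁, map_sum, Finset.mul_sum, Finset.sum_div]
    refine Finset.sum_congr rfl fun l _ => ?_
    rw [coeff_C_mul]
    simp only [expS, coeff_mk]
    rw [mul_pow]
    ring
  have hLeft := double_sum_eq n (w₂ : ℂ) (w₁ : ℂ)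
    (fun r => B1 (m' + 1) r ((w₂ : ℂ) * x)) (fun r => B2 m' r ((w₁ : ℂ) * y))
    (fun k => ∑ l ∈ Finset.range (w₁ * d), χ (l : ZMod d) * (ξ ^ w₂) ^ l * (l : ℂ) ^ k)
    A1 U₂ G2 hR1 hT2 hQ2
  have hRight := double_sum_eq n (w₁ : ℂ) (w₂ : ℂ)
    (fun r => B2 (m' + 1) r ((w₁ : ℂ) * x)) (fun r => B1 m' r ((w₂ : ℂ) * y))
    (fun k => ∑ l ∈ Finset.range (w₂ * d), χ (l : ZMod d) * (ξ ^ w₁) ^ l * (l : ℂ) ^ k)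
    A2 U₁ G1 hR2 hT1 hQ1
  rw [hLeft, hRight, main]
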